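/- arXiv:1803.04506 — 2 statements merged into one kernel-verified Lean document; each statement's English description precedes it below -/
import Mathlib

section
/- In a rooted tree with probing set P containing all leaves, let n be a node of depth k, T_n^k := D_n its subtree, and P_n^k := D_n ∩ P. If n ∈ P then the metered level set of n satisfies M_n^k := N_n^k ∩ P = P_n^k; conversely, if some node m ∈ T_n^k ∩ P satisfies M_m^k = P_n^k and m has depth strictly greater than k, a contradiction arises — hence the root n of the subtree belongs to P if and only if there exists a node m ∈ P_n^k with M_m^k = P_n^k (and that node must be n itself). -/
/-- A finite rooted tree, encoded by a parent function together with a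
consistent depth function (root at depth `0`). -/
structure FinRootedTree (V : Type*) [Fintype V] [DecidableEq V] where
  root : V
  parent : V → V
  depth : V → ℕ
  depth_root : depth root = 0
  parent_root : parent root = root
  depth_parent : ∀ v, v ≠ root → depth (parent v) + 1 = depth v
  eq_root_of_depth_eq_zero : ∀ v, depth v = 0 → v = root

namespace FinRootedTree

variable {V : Type*} [Fintype V] [DecidableEq V]

/-- The ancestor `α_m^k` of `m` at depth `k` (meaningful for `k ≤ depth m`). -/
def anc (G : FinRootedTree V) (m : V) (k : ℕ) : V := G.parent^[G.depth m - k] m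

/-- `a` is an ancestor of `m` (with `m` an ancestor of itself). -/
def IsAncestor (G : FinRootedTree V) (a m : V) : Prop :=
  ∃ k, k ≤ G.depth m ∧ G.anc m k = a

/-- The set `D_n` of descendants of `n`, including `n` itself. -/
def desc (G : FinRootedTree V) (n : V) : Set V := {s | G.IsAncestor n s}

/-- The `k`-th level set `N_m^k` of node `m` (for `k ≤ depth m`). -/
def levelSet (G : FinRootedTree V) (m : V) (k : ℕ) : Set V :=
  if k < G.depth m then G.desc (G.anc m k) \ G.desc (G.anc m (k + 1)) else G.desc m

/-- A leaf node: no descendants besides itself. -/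
def IsLeaf (G : FinRootedTree V) (m : V) : Prop := G.desc m = {m}

/-- `R_{m,n}`: the sum of the weights of all edges both of whose endpoints are
common ancestors of `m` and `n`.  The edge joining `v ≠ root` to its parent is
recorded by its lower endpoint `v` with weight `w v`. -/
noncomputable def Rres (G : FinRootedTree V) (w : V → ℝ) (m n : V) : ℝ :=
  ∑ᶠ v ∈ {v | v ≠ G.root ∧ G.IsAncestor v m ∧ G.IsAncestor v n}, w v


end FinRootedTree

namespace FinRootedTree

variable {V : Type*} [Fintype V] [DecidableEq V]

lemma depth_iter (G : FinRootedTree V) (m : V) :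
    ∀ i, i ≤ G.depth m → G.depth (G.parent^[i] m) = G.depth m - i := by
  intro i
  induction i with
  | zero => simp
  | succ i ih =>
    intro h
    have hi : i ≤ G.depth m := Nat.le_of_succ_le h
    have hd := ih hi
    have hne : G.parent^[i] m ≠ G.root := by
      intro hr
      have : G.depth (G.parent^[i] m) = 0 := by rw [hr, G.depth_root]
      omega
    rw [Function.iterate_succ_apply']
    have := G.depth_parent _ hne
    omega

lemma depth_anc (G : FinRootedTree V) (m : V) (j : ℕ) (hj : j ≤ G.depth m) :
    G.depth (G.anc m j) = j := by
  have := G.depth_iter m (G.depth m - j) (Nat.sub_le _ _)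
  unfold anc
  omega

lemma self_mem_desc (G : FinRootedTree V) (m : V) : m ∈ G.desc m :=
  ⟨G.depth m, le_rfl, by simp [anc]⟩

end FinRootedTree

theorem root_mem_probing_iff_metered_eq {V : Type*} [Fintype V] [DecidableEq V]
    (G : FinRootedTree V) (P : Set V) (hP : {v | G.IsLeaf v} ⊆ P)
    (n : V) (k : ℕ) (hn : G.depth n = k) :
    (n ∈ P ↔ ∃ m ∈ G.desc n ∩ P, G.levelSet m k ∩ P = G.desc n ∩ P) ∧
      ∀ m ∈ G.desc n ∩ P, G.levelSet m k ∩ P = G.desc n ∩ P → m = n := by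
  have key : ∀ m ∈ G.desc n ∩ P, G.levelSet m k ∩ P = G.desc n ∩ P → m = n := by
    rintro m ⟨hmd, hmP⟩ heq
    obtain ⟨j, hj, hja⟩ := hmd
    have hdj : G.depth (G.anc m j) = j := G.depth_anc m j hj
    have hjk : j = k := by rw [hja, hn] at hdj; omega
    subst hjk
    -- depth m ≥ j; show depth m = j
    by_cases hlt : j < G.depth m
    · exfalso
      have hm1 : m ∈ G.desc (G.anc m (j + 1)) := ⟨j + 1, hlt, rfl⟩
      have hm2 : m ∈ G.desc n ∩ P := ⟨⟨j, hj, hja⟩, hmP⟩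
      rw [← heq] at hm2
      have := hm2.1
      rw [FinRootedTree.levelSet, if_pos hlt] at this
      exact this.2 hm1
    · have hdm : G.depth m = j := by omega
      have : G.anc m j = m := by
        unfold FinRootedTree.anc
        rw [hdm]
        simp
      rw [this] at hja
      exact hja
  refine ⟨⟨fun hnP => ?_, fun ⟨m, hm, heq⟩ => ?_⟩, key⟩
  · refine ⟨n, ⟨G.self_mem_desc n, hnP⟩, ?_⟩
    rw [FinRootedTree.levelSet, if_neg (by omega)]
  · have := key m hm heq
    subst this
    exact hm.2
end

section
/- In a weighted tree with strictly positive edge weights, the effective resistance between two nodes m and n, defined as r_mn^eff := (e_m − e_n)ᵀ R (e_m − e_n) where R is the inverse of the reduced weighted Laplacian (grounding the root), equals the sum of the edge weights along the unique path from m to n. -/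
open Matrix

/-- Conductance between `u` and `v`: `1/r` on the (unique) edge joining them, else `0`.
The edge joining `v ≠ root` to its parent carries resistance `w v`. -/
noncomputable def edgeCond {n : ℕ} (G : FinRootedTree (Fin (n + 1))) (w : Fin (n + 1) → ℝ)
    (u v : Fin (n + 1)) : ℝ :=
  (if u ≠ G.root ∧ G.parent u = v then 1 / w u else 0) +
    (if v ≠ G.root ∧ G.parent v = u then 1 / w v else 0)

/-- The weighted graph Laplacian with conductances `edgeCond`. -/
noncomputable def lap {n : ℕ} (G : FinRootedTree (Fin (n + 1))) (w : Fin (n + 1) → ℝ) :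
    Matrix (Fin (n + 1)) (Fin (n + 1)) ℝ :=
  fun u v => if u = v then ∑ x, edgeCond G w u x else -edgeCond G w u v

/-- `R`, the inverse of the reduced Laplacian obtained by grounding (deleting) the root `0`. -/
noncomputable def redLapInv {n : ℕ} (G : FinRootedTree (Fin (n + 1))) (w : Fin (n + 1) → ℝ) :
    Matrix (Fin n) (Fin n) ℝ :=
  (Matrix.of fun i j : Fin n => lap G w i.succ j.succ)⁻¹

/-!
Let `B` be the reduced node–edge incidence matrix of the tree and let `X` be the matrix whose
column `e` is the indicator of the subtree hanging from edge `e`. The Laplacian factors as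
`L = B diag(1/r) Bᵀ`, and `Bᵀ X = 1` because the subtree below a node `v` is joined to the rest of
the tree by the single edge from `v` to its parent. Hence `R = X diag(r) Xᵀ`, so
`(e_m - e_n)ᵀ R (e_m - e_n) = ∑ₑ rₑ (X_{me} - X_{ne})²`, and `(X_{me} - X_{ne})²` is the indicator
of the edges lying above exactly one of `m`, `n`: the edges of the path from `m` to `n`.
-/

open scoped Classical

theorem Matrix.transpose_submatrix_succ_mul_submatrix_succ {n : ℕ} {m o R : Type*} [Fintype m]
    [NonUnitalNonAssocSemiring R] (M : Matrix (Fin (n + 1)) m R) (N : Matrix (Fin (n + 1)) o R)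
    (hN : ∀ j, N 0 j = 0) :
    (M.submatrix Fin.succ id)ᵀ * N.submatrix Fin.succ id = Mᵀ * N := by
  ext
  simp [mul_apply, Fin.sum_univ_succ, hN]

theorem Matrix.dotProduct_mulVec_mul_diagonal_mul_transpose {m e R : Type*} [Fintype m]
    [Fintype e] [DecidableEq e] [CommRing R] (A : Matrix m e R) (d : e → R) (x : m → R) :
    x ⬝ᵥ (A * diagonal d * Aᵀ) *ᵥ x = ∑ i, d i * (x ᵥ* A) i ^ 2 := by
  rw [← mulVec_mulVec, dotProduct_mulVec, ← vecMul_vecMul, mulVec_transpose]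
  simp only [dotProduct, vecMul_diagonal]
  exact Finset.sum_congr rfl fun i _ => by ring

theorem Fin.sum_ite_eq_succ {n : ℕ} {M : Type*} [AddCommMonoid M] (u : Fin (n + 1)) (f : Fin (n + 1) → M) :
    ∑ e : Fin n, (if u = e.succ then f e.succ else 0) = if u = 0 then 0 else f u := by
  cases u using Fin.cases <;> simp [Fin.succ_ne_zero, eq_comm]

namespace FinRootedTree

variable {V : Type*} [Fintype V] [DecidableEq V] (G : FinRootedTree V)

theorem iterate_parent_depth (m : V) : G.parent^[G.depth m] m = G.root := by
  induction h : G.depth m generalizing m with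
  | zero => exact G.eq_root_of_depth_eq_zero m h
  | succ d ih =>
    have hm : m ≠ G.root := by rintro rfl; simp [G.depth_root] at h
    have hd := G.depth_parent m hm
    rw [Function.iterate_succ_apply, ih]
    omega

theorem isAncestor_iff_exists_iterate {a m : V} :
    G.IsAncestor a m ↔ ∃ j, G.parent^[j] m = a := by
  refine ⟨fun ⟨_, _, hk⟩ => ⟨_, hk⟩, fun ⟨j, hj⟩ => ?_⟩
  rcases le_or_gt j (G.depth m) with h | h
  · exact ⟨G.depth m - j, Nat.sub_le _ _, by rw [anc, Nat.sub_sub_self h, hj]⟩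
  · refine ⟨0, Nat.zero_le _, ?_⟩
    rw [anc, Nat.sub_zero, ← hj, ← Nat.sub_add_cancel h.le, Function.iterate_add_apply,
      G.iterate_parent_depth, Function.iterate_fixed G.parent_root]

theorem isAncestor_self (m : V) : G.IsAncestor m m :=
  G.isAncestor_iff_exists_iterate.2 ⟨0, rfl⟩

theorem isAncestor_root_iff {v : V} : G.IsAncestor v G.root ↔ v = G.root := by
  simp [isAncestor_iff_exists_iterate, Function.iterate_fixed G.parent_root, eq_comm]

theorem isAncestor_iff_eq_or_isAncestor_parent {v x : V} :
    G.IsAncestor v x ↔ v = x ∨ G.IsAncestor v (G.parent x) := by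
  simp only [isAncestor_iff_exists_iterate]
  constructor
  · rintro ⟨_ | j, rfl⟩
    · exact Or.inl rfl
    · exact Or.inr ⟨j, (Function.iterate_succ_apply ..).symm⟩
  · rintro (rfl | ⟨j, rfl⟩)
    · exact ⟨0, rfl⟩
    · exact ⟨j + 1, Function.iterate_succ_apply ..⟩

theorem parent_ne_self {v : V} (hv : v ≠ G.root) : G.parent v ≠ v :=
  fun h => by have := G.depth_parent v hv; rw [h] at this; omega

theorem depth_parent_le (v : V) : G.depth (G.parent v) ≤ G.depth v := by
  by_cases hv : v = G.root
  · rw [hv, G.parent_root]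
  · exact (G.depth_parent v hv).le.trans' (Nat.le_succ _)

theorem depth_le_of_isAncestor {a m : V} (h : G.IsAncestor a m) : G.depth a ≤ G.depth m := by
  obtain ⟨j, rfl⟩ := G.isAncestor_iff_exists_iterate.1 h
  induction j with
  | zero => rfl
  | succ j ih =>
    rw [Function.iterate_succ_apply']
    exact (G.depth_parent_le _).trans (ih (G.isAncestor_iff_exists_iterate.2 ⟨j, rfl⟩))

theorem not_isAncestor_parent_self {x : V} (hx : x ≠ G.root) : ¬G.IsAncestor x (G.parent x) :=
  fun h => by have := G.depth_le_of_isAncestor h; have := G.depth_parent x hx; omega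

theorem ite_isAncestor_sub_ite_isAncestor_parent {R : Type*} [Ring R] (v : V) {x : V}
    (hx : x ≠ G.root) :
    ((if G.IsAncestor v x then 1 else 0) - if G.IsAncestor v (G.parent x) then 1 else 0 : R) =
      if v = x then 1 else 0 := by
  by_cases hvx : v = x
  · subst hvx
    simp [G.isAncestor_self, G.not_isAncestor_parent_self hx]
  · rw [G.isAncestor_iff_eq_or_isAncestor_parent (x := x)]
    simp [hvx]

section Incidence

variable {n : ℕ} (G : FinRootedTree (Fin (n + 1)))

/-- Edge `e : Fin n` joins the node `e.succ` to its parent (the root being `0`). -/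
noncomputable def incidence : Matrix (Fin (n + 1)) (Fin n) ℝ :=
  of fun u e => (if u = e.succ then 1 else 0) - if u = G.parent e.succ then 1 else 0

noncomputable def subtreeIndicator : Matrix (Fin (n + 1)) (Fin n) ℝ :=
  of fun u e => if G.IsAncestor e.succ u then 1 else 0

theorem incidence_transpose_mul_subtreeIndicator (hroot : G.root = 0) :
    G.incidenceᵀ * G.subtreeIndicator = 1 := by
  ext e v
  have he : e.succ ≠ G.root := hroot ▸ e.succ_ne_zero
  simp only [mul_apply, transpose_apply, incidence, subtreeIndicator, of_apply, sub_mul, ite_mul,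
    one_mul, zero_mul, Finset.sum_sub_distrib, Finset.sum_ite_eq', Finset.mem_univ, if_true,
    G.ite_isAncestor_sub_ite_isAncestor_parent _ he, Fin.succ_inj]
  simp [one_apply, eq_comm]

theorem subtreeIndicator_zero (hroot : G.root = 0) (e : Fin n) : G.subtreeIndicator 0 e = 0 := by
  rw [subtreeIndicator, of_apply, ← hroot,
    if_neg (mt G.isAncestor_root_iff.1 (hroot ▸ e.succ_ne_zero))]

end Incidence

end FinRootedTree

section Laplacian

variable {n : ℕ} (G : FinRootedTree (Fin (n + 1)))

theorem edgeCond_eq_sum (hroot : G.root = 0) (w : Fin (n + 1) → ℝ) (u v : Fin (n + 1)) :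
    edgeCond G w u v = ∑ e : Fin n, (w e.succ)⁻¹ *
      ((if u = e.succ ∧ v = G.parent e.succ then 1 else 0) +
        if u = G.parent e.succ ∧ v = e.succ then 1 else 0) := by
  have hswap (e : Fin n) :
      (u = G.parent e.succ ∧ v = e.succ) ↔ (v = e.succ ∧ u = G.parent e.succ) := and_comm
  simp only [hswap, mul_add, Finset.sum_add_distrib, mul_ite, mul_one, mul_zero, ite_and]
  rw [Fin.sum_ite_eq_succ u (fun x => if v = G.parent x then (w x)⁻¹ else 0),
    Fin.sum_ite_eq_succ v (fun x => if u = G.parent x then (w x)⁻¹ else 0), edgeCond, hroot]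
  simp [eq_comm, ite_and]

theorem lap_eq_incidence_mul (hroot : G.root = 0) (w : Fin (n + 1) → ℝ) :
    lap G w = G.incidence * diagonal (fun e : Fin n => (w e.succ)⁻¹) * G.incidenceᵀ := by
  ext u v
  have hpe (e : Fin n) : G.parent e.succ ≠ e.succ := G.parent_ne_self (hroot ▸ e.succ_ne_zero)
  rw [lap, mul_apply]
  simp only [mul_diagonal, transpose_apply, FinRootedTree.incidence, of_apply]
  split_ifs with huv
  · subst huv
    simp only [edgeCond_eq_sum G hroot]
    rw [Finset.sum_comm]
    refine Finset.sum_congr rfl fun e _ => ?_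
    rw [← Finset.mul_sum]
    by_cases h1 : u = e.succ <;> by_cases h2 : u = G.parent e.succ <;> simp_all
  · rw [edgeCond_eq_sum G hroot, ← Finset.sum_neg_distrib]
    refine Finset.sum_congr rfl fun e _ => ?_
    by_cases h1 : u = e.succ <;> by_cases h2 : u = G.parent e.succ <;>
      by_cases h3 : v = e.succ <;> by_cases h4 : v = G.parent e.succ <;> simp_all

theorem redLapInv_eq (hroot : G.root = 0) {w : Fin (n + 1) → ℝ} (hw : ∀ e : Fin n, w e.succ ≠ 0) :
    redLapInv G w = G.subtreeIndicator.submatrix Fin.succ id * diagonal (fun e => w e.succ) *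
      (G.subtreeIndicator.submatrix Fin.succ id)ᵀ := by
  set d : Fin n → ℝ := fun e => w e.succ
  set B := G.incidence.submatrix Fin.succ id
  set A := G.subtreeIndicator.submatrix Fin.succ id
  have hlap : (of fun i j : Fin n => lap G w i.succ j.succ) = B * diagonal d⁻¹ * Bᵀ := by
    ext i j
    rw [of_apply, lap_eq_incidence_mul G hroot]
    rfl
  have hBA : Bᵀ * A = 1 := by
    rw [Matrix.transpose_submatrix_succ_mul_submatrix_succ _ _ (G.subtreeIndicator_zero hroot),
      G.incidence_transpose_mul_subtreeIndicator hroot]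
  have hD : diagonal d⁻¹ * diagonal d = 1 := by
    rw [diagonal_mul_diagonal, ← diagonal_one]
    exact congrArg diagonal (funext fun e => inv_mul_cancel₀ (hw e))
  refine inv_eq_right_inv ?_
  calc (of fun i j : Fin n => lap G w i.succ j.succ) * (A * diagonal d * Aᵀ)
      = B * diagonal d⁻¹ * (Bᵀ * A) * diagonal d * Aᵀ := by
        rw [hlap]; simp only [Matrix.mul_assoc]
    _ = (A * Bᵀ)ᵀ := by
        rw [hBA, Matrix.mul_one, Matrix.mul_assoc B, hD, Matrix.mul_one, transpose_mul,
          transpose_transpose]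
    _ = 1 := by rw [mul_eq_one_comm.1 hBA, transpose_one]

end Laplacian

/-- The effective resistance `(e_m - e_k)ᵀ R (e_m - e_k)` between two non-root nodes equals the
sum of the edge weights along the unique path joining them (the edges whose lower endpoint is an
ancestor of exactly one of the two nodes). -/
theorem effectiveResistance_eq_path_sum {n : ℕ} (G : FinRootedTree (Fin (n + 1)))
    (hroot : G.root = 0) (w : Fin (n + 1) → ℝ) (hw : ∀ v, v ≠ G.root → 0 < w v)
    (m k : Fin n) :
    (Pi.single m 1 - Pi.single k 1) ⬝ᵥ
        (redLapInv G w).mulVec (Pi.single m 1 - Pi.single k 1) =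
      ∑ᶠ v ∈ {v | v ≠ G.root ∧
          ((G.IsAncestor v m.succ ∧ ¬G.IsAncestor v k.succ) ∨
            (G.IsAncestor v k.succ ∧ ¬G.IsAncestor v m.succ))}, w v := by
  have hw' (e : Fin n) : w e.succ ≠ 0 := (hw _ (hroot ▸ e.succ_ne_zero)).ne'
  rw [redLapInv_eq G hroot hw', dotProduct_mulVec_mul_diagonal_mul_transpose, sub_vecMul,
    single_one_vecMul, single_one_vecMul, finsum_mem_def, finsum_eq_sum_of_fintype,
    Fin.sum_univ_succ, Set.indicator_of_notMem (by simp [hroot]), zero_add]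
  refine Finset.sum_congr rfl fun e _ => ?_
  have he : e.succ ≠ G.root := hroot ▸ e.succ_ne_zero
  simp only [Set.indicator_apply, Set.mem_ofPred_eq, Pi.sub_apply, row_apply, submatrix_apply, id,
    FinRootedTree.subtreeIndicator, of_apply]
  by_cases hm : G.IsAncestor e.succ m.succ <;> by_cases hk : G.IsAncestor e.succ k.succ <;>
    simp [he, hm, hk]
end
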